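/- Let Σ be a signature and T₁, T₂ be Σ-terms with the same degree n and the same decoration word. Then T₁ ≤ T₂ in the easterly wind order (i.e., cnc(T₁)(i) ≤ cnc(T₂)(i) for all i ∈ [n]) if and only if for every internal node i, the parent edge (i₁, j₁, i) of i in T₁ is dominated by the parent edge (i₂, j₂, i) of i in T₂, meaning the pair (i₁, -j₁) is lexicographically ≤ (i₂, -j₂). -/

import Mathlib

structure Signature where
  carrier : Type
  arity : carrier → ℕ

namespace EW

variable {σ : Signature}

/-- Σ-terms: planar rooted trees with nodes decorated by the signature. -/
inductive PreTerm (σ : Signature) where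
  | leaf : PreTerm σ
  | node : σ.carrier → List (PreTerm σ) → PreTerm σ

/-- Well-formedness: each internal node decorated by `s` has `arity s` children. -/
def WF : PreTerm σ → Prop
  | .leaf => True
  | .node s l => l.length = σ.arity s ∧ ∀ t ∈ l, WF t

def isLeaf : PreTerm σ → Bool
  | .leaf => true
  | .node _ _ => false

/-- Subterm at an address (list of 0-based child positions). -/
def subAt : PreTerm σ → List ℕ → Option (PreTerm σ)
  | t, [] => some t
  | .leaf, _ :: _ => none
  | .node _ l, j :: p =>
      match l[j]? with
      | some t => subAt t p
      | none => none
  termination_by t p => p.length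

/-- Replace the subterm at an address. -/
def replaceAt : PreTerm σ → List ℕ → PreTerm σ → PreTerm σ
  | _, [], R => R
  | .leaf, _ :: _, _ => .leaf
  | .node s l, j :: p, R => .node s (l.set j (replaceAt (l.getD j .leaf) p R))
  termination_by t p _ => p.length

/-- Addresses of all positions (internal nodes and leaves) in preorder. -/
def addrs : PreTerm σ → List (List ℕ)
  | .leaf => [[]]
  | .node _ l =>
      [] :: ((l.attach.map (fun t => addrs t.1)).zipIdx.map
        (fun jp => jp.1.map (jp.2 :: ·))).flatten
  decreasing_by
    have := List.sizeOf_lt_of_mem t.2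
    simp only [PreTerm.node.sizeOf_spec]
    omega

def isNodeAt (T : PreTerm σ) (p : List ℕ) : Bool :=
  match subAt T p with
  | some (.node _ _) => true
  | _ => false

/-- Addresses of internal nodes, in preorder. -/
def nodeAddrs (T : PreTerm σ) : List (List ℕ) := (addrs T).filter (isNodeAt T)

/-- Degree: number of internal nodes. -/
def deg (T : PreTerm σ) : ℕ := (nodeAddrs T).length

/-- Address of the `i`-th internal node (1-indexed, preorder). -/
def nodeAddr (T : PreTerm σ) (i : ℕ) : Option (List ℕ) := (nodeAddrs T)[i-1]?

/-- Preorder index (1-based) of the internal node at address `p`. -/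
def nodeIdx (T : PreTerm σ) (p : List ℕ) : ℕ := (nodeAddrs T).idxOf p + 1

/-- Parent of internal node `i` (the root is its own parent). -/
def paOf (T : PreTerm σ) (i : ℕ) : ℕ :=
  match nodeAddr T i with
  | some [] => 1
  | some p => nodeIdx T p.dropLast
  | none => 0

/-- Local position of internal node `i` among its parent's children
(1-based; the root has local position 0). -/
def lpOf (T : PreTerm σ) (i : ℕ) : ℕ :=
  match nodeAddr T i with
  | some [] => 0
  | some p => p.getLast?.getD 0 + 1
  | none => 0

def decAt (T : PreTerm σ) (p : List ℕ) : Option σ.carrier :=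
  match subAt T p with
  | some (.node s _) => some s
  | _ => none

/-- The decoration word: decorations of internal nodes in preorder. -/
def dcWord (T : PreTerm σ) : List σ.carrier := (nodeAddrs T).filterMap (decAt T)

def arityOfNode (T : PreTerm σ) (i : ℕ) : ℕ :=
  match nodeAddr T i with
  | some p =>
      match decAt T p with
      | some s => σ.arity s
      | none => 0
  | none => 0

/-- The connection word entry:
`cnc T i = pa T i + 1 - 2 ^ (lp T i - arity (decoration of pa T i))`. -/
def cnc (T : PreTerm σ) (i : ℕ) : ℚ :=
  (paOf T i : ℚ) + 1 - (2 : ℚ) ^ ((lpOf T i : ℤ) - (arityOfNode T (paOf T i) : ℤ))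

def cncWord (T : PreTerm σ) : List ℚ := (List.range (deg T)).map (fun k => cnc T (k+1))

/-- The Σ-easterly wind order. -/
def ewLE (T₁ T₂ : PreTerm σ) : Prop :=
  dcWord T₁ = dcWord T₂ ∧ ∀ i, 1 ≤ i → i ≤ deg T₁ → cnc T₁ i ≤ cnc T₂ i

/-- The easterly wind rewrite rule `T₁ ⇀_i T₂` : the internal node `i` of `T₁`
is visited immediately after a leaf in preorder, and `T₂` is obtained by moving
the subterm rooted at `i` onto that leaf. -/
def Rewrite (i : ℕ) (T₁ T₂ : PreTerm σ) : Prop :=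
  ∃ p q k S,
    nodeAddr T₁ i = some p ∧
    (addrs T₁)[k]? = some q ∧ (addrs T₁)[k+1]? = some p ∧
    subAt T₁ q = some .leaf ∧
    subAt T₁ p = some S ∧
    T₂ = replaceAt (replaceAt T₁ p .leaf) q S

def RewriteAny (T₁ T₂ : PreTerm σ) : Prop := ∃ i, 1 ≤ i ∧ Rewrite i T₁ T₂

/-- `(i₁, j₁, i)` is dominated by `(i₂, j₂, i)` iff `(i₁, -j₁) ≤lex (i₂, -j₂)`:
here on the pairs of (parent, local position). -/
def Dominated (e₁ e₂ : ℕ × ℕ) : Prop := e₁.1 < e₂.1 ∨ (e₁.1 = e₂.1 ∧ e₂.2 ≤ e₁.2)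

/-- `i''` is a (strict) descendant of `i'`. -/
def Desc (T : PreTerm σ) (i' i'' : ℕ) : Prop :=
  ∃ p q, nodeAddr T i' = some p ∧ nodeAddr T i'' = some q ∧ p <+: q ∧ p ≠ q

end EW
namespace EW

variable {σ : Signature}

def sortNodesFirst (l : List (PreTerm σ)) : List (PreTerm σ) :=
  l.filter (fun t => !isLeaf t) ++ l.filter (fun t => isLeaf t)

def sortLeavesFirst (l : List (PreTerm σ)) : List (PreTerm σ) :=
  l.filter (fun t => isLeaf t) ++ l.filter (fun t => !isLeaf t)

mutual
/-- Tilting map: at every internal node whose preorder index (the second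
argument is the index of the current root) belongs to `X`, rearrange the
children so that the non-leaf children, keeping their relative order, come
before the leaf children. -/
def tltT (X : ℕ → Prop) [DecidablePred X] : PreTerm σ → ℕ → PreTerm σ
  | .leaf, _ => .leaf
  | .node s l, n =>
      .node s (if X n then sortNodesFirst (tltL X l (n+1)) else tltL X l (n+1))
def tltL (X : ℕ → Prop) [DecidablePred X] : List (PreTerm σ) → ℕ → List (PreTerm σ)
  | [], _ => []
  | t :: ts, n => tltT X t n :: tltL X ts (n + deg t)
end

mutual
/-- Reversed tilting map: leaf children first. -/
def tltRT (X : ℕ → Prop) [DecidablePred X] : PreTerm σ → ℕ → PreTerm σ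
  | .leaf, _ => .leaf
  | .node s l, n =>
      .node s (if X n then sortLeavesFirst (tltRL X l (n+1)) else tltRL X l (n+1))
def tltRL (X : ℕ → Prop) [DecidablePred X] : List (PreTerm σ) → ℕ → List (PreTerm σ)
  | [], _ => []
  | t :: ts, n => tltRT X t n :: tltRL X ts (n + deg t)
end

/-- The X-tilting map. -/
def tlt (X : ℕ → Prop) [DecidablePred X] (T : PreTerm σ) : PreTerm σ := tltT X T 1

/-- The X-reversed tilting map. -/
def tltR (X : ℕ → Prop) [DecidablePred X] (T : PreTerm σ) : PreTerm σ := tltRT X T 1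

/-- Fully tilted: tilted w.r.t. the set of all positive integers. -/
def FullyTilted (T : PreTerm σ) : Prop := tlt (fun n => 1 ≤ n) T = T

/-- {1}-tilted. -/
def tltOne (T : PreTerm σ) : PreTerm σ := tlt (fun n => n = 1) T

/-- Number of internal-node siblings of the node `i` lying weakly to its left
(including `i` itself). -/
def lb (T : PreTerm σ) (i : ℕ) : ℕ :=
  match nodeAddr T i with
  | some [] => 0
  | some p =>
      match subAt T p.dropLast with
      | some (.node _ l) =>
          ((l.take (p.getLast?.getD 0 + 1)).filter (fun t => !isLeaf t)).length
      | _ => 0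
  | none => 0

/-- Scope: number of (strict) internal-node descendants of the node `i`. -/
def sc (T : PreTerm σ) (i : ℕ) : ℕ :=
  match nodeAddr T i with
  | some p =>
      match subAt T p with
      | some S => deg S - 1
      | none => 0
  | none => 0

end EW
namespace EW

variable {σ : Signature}

/-- The signature Σ_ℕ := Σ ⊔ ℕ, where `n : ℕ` has arity `n`. -/
def sigN (σ : Signature) : Signature := ⟨σ.carrier ⊕ ℕ, Sum.elim σ.arity id⟩

/-- All decorations come from Σ (no ℕ-decoration). -/
def OnlyBase : PreTerm (sigN σ) → Prop
  | .leaf => True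
  | .node (Sum.inl _) l => ∀ t ∈ l, OnlyBase t
  | .node (Sum.inr _) _ => False
  decreasing_by
    rename_i v h
    have := List.sizeOf_lt_of_mem h
    have h2 := PreTerm.node.sizeOf_spec (σ := sigN σ) (Sum.inl v) l
    first | omega | (rw [h2]; omega) | (simp only [h2]; omega)

/-- The corolla on `s`: a single internal node with `arity s` leaves. -/
def corolla (s : σ.carrier) : PreTerm σ := .node s (List.replicate (σ.arity s) .leaf)

/-- Number of leaves (arity) of a term. -/
def arT (T : PreTerm σ) : ℕ := ((addrs T).filter (fun p => !isNodeAt T p)).length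

mutual
/-- Replace the leftmost leaf of the first term by the second term. -/
def graftLeft : PreTerm σ → PreTerm σ → PreTerm σ
  | .leaf, R => R
  | .node s l, R => .node s (graftLeftL l R)
def graftLeftL : List (PreTerm σ) → PreTerm σ → List (PreTerm σ)
  | [], _ => []
  | t :: ts, R => if arT t = 0 then t :: graftLeftL ts R else graftLeft t R :: ts
end

/-- `f↑(w)`: the forest of corollas `|w| · C(w 1) ⋯ C(w n)`. -/
def fUp (w : List σ.carrier) : PreTerm (sigN σ) :=
  .node (Sum.inr w.length) (w.map (fun s => corolla (σ := sigN σ) (Sum.inl s)))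

/-- `f↓(w)`: iteratively graft the corollas of the letters of `w` onto the
leftmost leaf, starting from the corolla of `|w|`. -/
def fDown (w : List σ.carrier) : PreTerm (sigN σ) :=
  w.foldl (fun F s => graftLeft F (corolla (σ := sigN σ) (Sum.inl s)))
    (corolla (σ := sigN σ) (Sum.inr w.length))

/-- Σ-forest: a Σ_ℕ-term `n · T₁ ⋯ T_n` with the `Tᵢ`'s Σ-terms. -/
def IsForest (F : PreTerm (sigN σ)) : Prop :=
  WF F ∧ ∃ n l, F = .node (Sum.inr n) l ∧ ∀ t ∈ l, OnlyBase t

/-- Size of a balanced forest: its degree minus one. -/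
def fsize (F : PreTerm (sigN σ)) : ℕ := deg F - 1

/-- Balanced Σ-forest: `deg F = n + 1` where `n` decorates the root. -/
def IsBalanced (F : PreTerm (sigN σ)) : Prop :=
  IsForest F ∧ ∃ n l, F = .node (Sum.inr n) l ∧ deg F = n + 1

/-- Leaning Σ-forest: balanced and {1}-tilted. -/
def IsLeaning (F : PreTerm (sigN σ)) : Prop := IsBalanced F ∧ tltOne F = F

/-- Concatenation of forests. -/
def fconc : PreTerm (sigN σ) → PreTerm (sigN σ) → PreTerm (sigN σ)
  | .node (Sum.inr n) l, .node (Sum.inr n') l' => .node (Sum.inr (n + n')) (l ++ l')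
  | F, _ => F

/-- The over operation on leaning forests. -/
def overOp (F₁ F₂ : PreTerm (sigN σ)) : PreTerm (sigN σ) := tltOne (fconc F₁ F₂)

/-- Number of extreme leaves: leaves visited after every internal node. -/
def extremeCount (T : PreTerm σ) : ℕ :=
  (((addrs T).map (fun p => !isNodeAt T p)).reverse.takeWhile id).length

mutual
/-- Graft the terms of the second argument (listed from the rightmost extreme
leaf to the leftmost) onto the extreme leaves of the first argument, from the
right. Returns the new term, the unused grafts and whether everything seen so
far is still in the extreme zone. -/
def gET : PreTerm σ → List (PreTerm σ) → PreTerm σ × List (PreTerm σ) × Bool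
  | .leaf, ts =>
      match ts with
      | [] => (.leaf, [], true)
      | g :: gs => (g, gs, true)
  | .node s l, ts =>
      let r := gEL l ts
      (.node s r.1, r.2.1, false)
def gEL : List (PreTerm σ) → List (PreTerm σ) → List (PreTerm σ) × List (PreTerm σ) × Bool
  | [], ts => ([], ts, true)
  | t :: us, ts =>
      let r := gEL us ts
      if r.2.2 then
        let a := gET t r.2.1
        (a.1 :: r.1, a.2.1, a.2.2)
      else (t :: r.1, r.2.1, false)
end

def childrenOf : PreTerm (sigN σ) → List (PreTerm (sigN σ))
  | .node _ l => l
  | .leaf => []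

/-- The under operation on leaning forests: graft the root subterms of
`F₂ ⌢ C(r)` onto the extreme leaves of `F₁ ⌢ C(n₂)`. -/
def under (F₁ F₂ : PreTerm (sigN σ)) : PreTerm (sigN σ) :=
  (gET (fconc F₁ (corolla (σ := sigN σ) (Sum.inr (fsize F₂))))
    (List.replicate (extremeCount F₁) PreTerm.leaf ++ (childrenOf F₂).reverse)).1

mutual
/-- Restriction machinery: keep only the internal nodes whose preorder index
satisfies `K`; kept nodes whose parent is removed float to the root. Returns,
for a subterm, the in-place result (a leaf if the root of the subterm is
removed) together with the list of floated subtrees. -/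
def restT (K : ℕ → Bool) : PreTerm (sigN σ) → ℕ → PreTerm (sigN σ) × List (PreTerm (sigN σ))
  | .leaf, _ => (.leaf, [])
  | .node s l, n =>
      let r := restL K l (n+1)
      if K n then (.node s (r.map Prod.fst), (r.map Prod.snd).flatten)
      else (.leaf, (r.map (fun a => (if isLeaf a.1 then [] else [a.1]) ++ a.2)).flatten)
def restL (K : ℕ → Bool) :
    List (PreTerm (sigN σ)) → ℕ → List (PreTerm (sigN σ) × List (PreTerm (sigN σ)))
  | [], _ => []
  | t :: ts, n => restT K t n :: restL K ts (n + deg t)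
end

def sumDeg (l : List (PreTerm σ)) : ℕ := (l.map deg).sum

/-- Restriction of a leaning forest to a set `I` of indices: keep the root and
the internal nodes `{i + 1 : i ∈ I}`, together with their adjacent edges;
the root gets decoration `#I` and is padded by leaves on the right. -/
def restrict (F : PreTerm (sigN σ)) (I : Finset ℕ) : PreTerm (sigN σ) :=
  match F with
  | .node (Sum.inr _) l =>
      let r := restL (fun i => decide (i - 1 ∈ I ∧ 2 ≤ i)) l 2
      let cs := (r.map (fun a => (if isLeaf a.1 then [] else [a.1]) ++ a.2)).flatten
      .node (Sum.inr I.card) (cs ++ List.replicate (I.card - sumDeg cs) .leaf)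
  | F => F

/-- k-top restriction. -/
def topRes (k : ℕ) (F : PreTerm (sigN σ)) : PreTerm (sigN σ) := restrict F (Finset.Icc 1 k)

/-- k-bottom restriction. -/
def botRes (k : ℕ) (F : PreTerm (sigN σ)) : PreTerm (sigN σ) :=
  restrict F (Finset.Icc (k+1) (fsize F))

end EW
namespace EW

/-- The signature ℕ where `arity n = n`. -/
def natSig : Signature := ⟨ℕ, id⟩

/-- `f↑` for words on the signature ℕ. -/
def fUpN (w : List ℕ) : PreTerm natSig :=
  .node w.length (w.map (corolla (σ := natSig)))

/-- `f↓` for words on the signature ℕ. -/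
def fDownN (w : List ℕ) : PreTerm natSig :=
  w.foldl (fun F s => graftLeft F (corolla (σ := natSig) s))
    (corolla (σ := natSig) w.length)

/-- The word `dw n = (n-1, n-2, …, 0)`. -/
def dwWord (n : ℕ) : List ℕ := (List.range n).reverse

/-- The minimum `dt n := n · C(n-1) ⋯ C(0)` of the rooted tree easterly wind
poset of order `n`. -/
def dt (n : ℕ) : PreTerm natSig := fUpN (dwWord n)

/-- Rooted trees. -/
inductive RTree where
  | node : List RTree → RTree

mutual
/-- Size (number of nodes) of a rooted tree. -/
def rsize : RTree → ℕ
  | .node l => 1 + rsizeL l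
def rsizeL : List RTree → ℕ
  | [] => 0
  | t :: ts => rsize t + rsizeL ts
end

mutual
/-- Scope sequence of a rooted tree: number of descendants of each node, in
preorder. -/
def scL : RTree → List ℕ
  | .node l => rsizeL l :: scLL l
def scLL : List RTree → List ℕ
  | [] => []
  | t :: ts => scL t ++ scLL ts
end

/-- The Tamari order on rooted trees (Knuth's realization): componentwise
comparison of scope sequences. -/
def tamLE (R₁ R₂ : RTree) : Prop :=
  rsize R₁ = rsize R₂ ∧ ∀ i, (scL R₁).getD i 0 ≤ (scL R₂).getD i 0

mutual
/-- Underlying rooted tree of a term: delete the leaves and forget the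
decorations. -/
def rt {σ : Signature} : PreTerm σ → RTree
  | .leaf => .node []
  | .node _ l => .node (rtL l)
def rtL {σ : Signature} : List (PreTerm σ) → List RTree
  | [] => []
  | .leaf :: ts => rtL ts
  | .node _ l :: ts => .node (rtL l) :: rtL ts
end

end EW

namespace EW
variable {σ : Signature}

lemma WF_node {s : σ.carrier} {l : List (PreTerm σ)} :
    WF (PreTerm.node s l) ↔ l.length = σ.arity s ∧ ∀ t ∈ l, WF t := by
  rw [WF]

lemma subAt_nil (T : PreTerm σ) : subAt T [] = some T := by cases T <;> simp [subAt]

lemma addrs_node (s : σ.carrier) (l : List (PreTerm σ)) :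
    addrs (PreTerm.node s l) =
      [] :: ((l.attach.map (fun t => addrs t.1)).zipIdx.map
        (fun jp => jp.1.map (jp.2 :: ·))).flatten := by
  rw [addrs]

lemma mem_flat_iff {l : List (PreTerm σ)} {p : List ℕ} :
    p ∈ ((l.attach.map (fun t => addrs t.1)).zipIdx.map
        (fun jp => jp.1.map (jp.2 :: ·))).flatten ↔
      ∃ j q t, l[j]? = some t ∧ q ∈ addrs t ∧ p = j :: q := by
  rw [List.attach_map_val]
  constructor
  · intro h
    obtain ⟨as, hmem, hp⟩ := List.mem_flatten.1 h
    obtain ⟨⟨qs, j⟩, hjq, rfl⟩ := List.mem_map.1 hmem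
    have hg : (l.map addrs)[j]? = some qs := List.mem_zipIdx_iff_getElem?.1 hjq
    rw [List.getElem?_map] at hg
    obtain ⟨t, ht, hqs⟩ := Option.map_eq_some_iff.1 hg
    obtain ⟨q, hq, rfl⟩ := List.mem_map.1 hp
    exact ⟨j, q, t, ht, hqs ▸ hq, rfl⟩
  · rintro ⟨j, q, t, ht, hq, rfl⟩
    refine List.mem_flatten.2 ⟨(addrs t).map (j :: ·), List.mem_map.2 ⟨(addrs t, j), ?_, rfl⟩,
      List.mem_map.2 ⟨q, hq, rfl⟩⟩
    exact List.mem_zipIdx_iff_getElem?.2 (by simp [List.getElem?_map, ht])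

lemma mem_addrs_node {s : σ.carrier} {l : List (PreTerm σ)} {p : List ℕ} :
    p ∈ addrs (PreTerm.node s l) ↔
      p = [] ∨ ∃ j q t, l[j]? = some t ∧ q ∈ addrs t ∧ p = j :: q := by
  rw [addrs_node, List.mem_cons, mem_flat_iff]

lemma mem_addrs_iff : ∀ (T : PreTerm σ) (p : List ℕ), p ∈ addrs T ↔ (subAt T p).isSome
  | .leaf, p => by cases p <;> simp [addrs, subAt]
  | .node s l, p => by
    rw [mem_addrs_node]
    cases p with
    | nil => simp [subAt_nil]
    | cons j q =>
      constructor
      · rintro (h | ⟨j', q', t, hj, hq, he⟩)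
        · cases h
        · cases he
          have := List.sizeOf_lt_of_mem (List.mem_of_getElem? hj)
          rw [(mem_addrs_iff t q)] at hq
          simp only [subAt, hj]
          exact hq
      · intro h
        simp only [subAt] at h
        cases hj : l[j]? with
        | none => rw [hj] at h; simp at h
        | some t =>
          rw [hj] at h
          have := List.sizeOf_lt_of_mem (List.mem_of_getElem? hj)
          exact Or.inr ⟨j, q, t, hj, (mem_addrs_iff t q).2 h, rfl⟩
  termination_by T _ => sizeOf T
  decreasing_by
    all_goals simp only [PreTerm.node.sizeOf_spec]; omega

lemma subAt_append (T : PreTerm σ) (p q : List ℕ) :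
    subAt T (p ++ q) = (subAt T p).bind (fun t => subAt t q) := by
  induction p generalizing T with
  | nil => simp [subAt_nil]
  | cons j p ih =>
    cases T with
    | leaf => simp [subAt]
    | node s l =>
      simp only [List.cons_append, subAt]
      cases hj : l[j]? with
      | none => simp
      | some t => simp [ih]

lemma WF_subAt {T t : PreTerm σ} {p : List ℕ} (hw : WF T) (h : subAt T p = some t) : WF t := by
  induction p generalizing T with
  | nil => rw [subAt_nil] at h; cases h; exact hw
  | cons j q ih =>
    cases T with
    | leaf => simp [subAt] at h
    | node s l =>
      simp only [subAt] at h
      cases hj : l[j]? with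
      | none => rw [hj] at h; simp at h
      | some u =>
        rw [hj] at h
        have hw' : l.length = σ.arity s ∧ ∀ t ∈ l, WF t := WF_node.1 hw
        exact ih (hw'.2 u (List.mem_of_getElem? hj)) h

lemma isNodeAt_iff {T : PreTerm σ} {p : List ℕ} :
    isNodeAt T p = true ↔ ∃ s l, subAt T p = some (.node s l) := by
  unfold isNodeAt
  cases h : subAt T p with
  | none => simp
  | some t => cases t <;> simp

lemma mem_nodeAddrs_iff {T : PreTerm σ} {p : List ℕ} :
    p ∈ nodeAddrs T ↔ ∃ s l, subAt T p = some (.node s l) := by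
  rw [nodeAddrs, List.mem_filter, mem_addrs_iff, isNodeAt_iff]
  constructor
  · exact fun h => h.2
  · rintro ⟨s, l, h⟩; exact ⟨by simp [h], ⟨s, l, h⟩⟩

lemma nodeAddrs_node (s : σ.carrier) (l : List (PreTerm σ)) :
    ∃ rest, nodeAddrs (PreTerm.node s l) = [] :: rest ∧ ∀ p ∈ rest, p ≠ [] := by
  rw [nodeAddrs, addrs_node, List.filter_cons]
  have h0 : isNodeAt (PreTerm.node s l) [] = true :=
    isNodeAt_iff.2 ⟨s, l, subAt_nil _⟩
  rw [if_pos h0]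
  refine ⟨_, rfl, fun p hp => ?_⟩
  have := List.mem_of_mem_filter hp
  obtain ⟨j, q, t, -, -, rfl⟩ := mem_flat_iff.1 this
  simp

lemma deg_leaf : deg (σ := σ) .leaf = 0 := by
  simp [deg, nodeAddrs, addrs, isNodeAt, subAt]

lemma filterMap_getElem? {α β : Type*} (f : α → Option β) (l : List α)
    (h : ∀ x ∈ l, (f x).isSome) (k : ℕ) : (l.filterMap f)[k]? = l[k]?.bind f := by
  induction l generalizing k with
  | nil => simp
  | cons a l ih =>
    obtain ⟨b, hb⟩ := Option.isSome_iff_exists.1 (h a (.head _))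
    cases k with
    | zero => simp [List.filterMap_cons, hb]
    | succ k => simp [List.filterMap_cons, hb, ih (fun x hx => h x (.tail _ hx))]

lemma dcWord_getElem? (T : PreTerm σ) (k : ℕ) :
    (dcWord T)[k]? = (nodeAddrs T)[k]?.bind (decAt T) := by
  refine filterMap_getElem? _ _ (fun p hp => ?_) k
  obtain ⟨s, l, h⟩ := mem_nodeAddrs_iff.1 hp
  simp [decAt, h]

lemma arity_eq_dcWord {T : PreTerm σ} {a : ℕ} (h1 : 1 ≤ a) (h2 : a ≤ deg T) :
    ∃ s, (dcWord T)[a-1]? = some s ∧ arityOfNode T a = σ.arity s := by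
  have hlt : a - 1 < (nodeAddrs T).length := by
    have : deg T = (nodeAddrs T).length := rfl
    omega
  set p := (nodeAddrs T)[a-1] with hp
  have hmem : p ∈ nodeAddrs T := List.getElem_mem hlt
  have hget : nodeAddr T a = some p := by
    rw [nodeAddr, List.getElem?_eq_getElem hlt]
  obtain ⟨s, l, hsub⟩ := mem_nodeAddrs_iff.1 hmem
  have hdec : decAt T p = some s := by simp [decAt, hsub]
  refine ⟨s, ?_, ?_⟩
  · rw [dcWord_getElem?, nodeAddr] at *
    rw [List.getElem?_eq_getElem hlt]
    exact hdec
  · simp [arityOfNode, hget, hdec]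

lemma indexOf_spec {α : Type*} [BEq α] [LawfulBEq α] {a : α} {l : List α} (h : a ∈ l) :
    l.idxOf a < l.length ∧ l[l.idxOf a]? = some a := by
  induction l with
  | nil => simp at h
  | cons b l ih =>
    by_cases hba : b = a
    · subst hba; simp [List.idxOf_cons]
    · have hne : (b == a) = false := beq_eq_false_iff_ne.2 hba
      have hmem : a ∈ l := by
        rcases List.mem_cons.1 h with h' | h'
        · exact absurd h'.symm hba
        · exact h'
      obtain ⟨ih1, ih2⟩ := ih hmem
      refine ⟨by simp [List.idxOf_cons, hne]; omega, ?_⟩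
      simpa [List.idxOf_cons, hne] using ih2

lemma nodeFacts {T : PreTerm σ} (hw : WF T) {i : ℕ} (hi1 : 1 ≤ i) (hi2 : i ≤ deg T) :
    1 ≤ paOf T i ∧ paOf T i ≤ deg T ∧ lpOf T i ≤ arityOfNode T (paOf T i) := by
  have hlt : i - 1 < (nodeAddrs T).length := by
    have : deg T = (nodeAddrs T).length := rfl
    omega
  have hget : nodeAddr T i = some ((nodeAddrs T)[i-1]) := by
    rw [nodeAddr, List.getElem?_eq_getElem hlt]
  have hmem : (nodeAddrs T)[i-1] ∈ nodeAddrs T := List.getElem_mem hlt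
  cases hp : (nodeAddrs T)[i-1] with
  | nil =>
    rw [hp] at hget
    have hpa : paOf T i = 1 := by rw [paOf, hget]
    have hlp : lpOf T i = 0 := by rw [lpOf, hget]
    refine ⟨by omega, by omega, by simp [hlp]⟩
  | cons a r =>
    rw [hp] at hget hmem
    obtain ⟨s', l', hsub⟩ := mem_nodeAddrs_iff.1 hmem
    set q := (a :: r).dropLast with hq
    set j := (a :: r).getLast (by simp) with hj
    have hsplit : a :: r = q ++ [j] := (List.dropLast_append_getLast (by simp)).symm
    rw [hsplit, subAt_append] at hsub
    cases hu : subAt T q with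
    | none => rw [hu] at hsub; simp at hsub
    | some u =>
      rw [hu] at hsub
      simp only [Option.bind_some] at hsub
      cases u with
      | leaf => simp [subAt] at hsub
      | node s₀ l₀ =>
        simp only [subAt] at hsub
        cases hj0 : l₀[j]? with
        | none => rw [hj0] at hsub; simp at hsub
        | some t =>
          rw [hj0] at hsub
          have hsub' : t = PreTerm.node s' l' := by simpa using hsub
          subst hsub'
          have hqmem : q ∈ nodeAddrs T := mem_nodeAddrs_iff.2 ⟨s₀, l₀, hu⟩
          have hpa : paOf T i = nodeIdx T q := by
            rw [paOf, hget]
          obtain ⟨hidx, hixg⟩ := indexOf_spec hqmem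
          have hpale : paOf T i ≤ deg T := by
            rw [hpa, nodeIdx]
            have : deg T = (nodeAddrs T).length := rfl
            omega
          have hnaq : nodeAddr T (nodeIdx T q) = some q := by
            rw [nodeIdx, nodeAddr]
            simpa using hixg
          have hlp : lpOf T i = j + 1 := by
            rw [lpOf, hget]
            show (a :: r).getLast?.getD 0 + 1 = j + 1
            rw [List.getLast?_eq_getLast_of_ne_nil (by simp : (a :: r) ≠ [])]
            rfl
          have har : arityOfNode T (paOf T i) = σ.arity s₀ := by
            rw [hpa, arityOfNode, hnaq]
            simp [decAt, hu]
          have hwf : l₀.length = σ.arity s₀ ∧ ∀ t ∈ l₀, WF t := WF_node.1 (WF_subAt hw hu)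
          have hlen : l₀.length = σ.arity s₀ := hwf.1
          have hjlt : j < l₀.length := by
            by_contra hc
            rw [List.getElem?_eq_none (by omega)] at hj0
            exact absurd hj0 (by simp)
          refine ⟨by rw [hpa, nodeIdx]; omega, hpale, ?_⟩
          rw [hlp, har]
          omega

lemma cnc_le_iff {a₁ a₂ l₁ l₂ r₁ r₂ : ℕ} (h1 : l₁ ≤ r₁) (h2 : l₂ ≤ r₂)
    (hr : a₁ = a₂ → r₁ = r₂) :
    ((a₁ : ℚ) + 1 - (2:ℚ) ^ ((l₁ : ℤ) - (r₁ : ℤ)) ≤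
      (a₂ : ℚ) + 1 - (2:ℚ) ^ ((l₂ : ℤ) - (r₂ : ℤ))) ↔
      (a₁ < a₂ ∨ (a₁ = a₂ ∧ l₂ ≤ l₁)) := by
  have e1 : (0:ℚ) < (2:ℚ) ^ ((l₁ : ℤ) - (r₁ : ℤ)) := by positivity
  have e2 : (0:ℚ) < (2:ℚ) ^ ((l₂ : ℤ) - (r₂ : ℤ)) := by positivity
  have f1 : (2:ℚ) ^ ((l₁ : ℤ) - (r₁ : ℤ)) ≤ 1 :=
    zpow_le_one_of_nonpos₀ one_le_two (by omega)
  have f2 : (2:ℚ) ^ ((l₂ : ℤ) - (r₂ : ℤ)) ≤ 1 :=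
    zpow_le_one_of_nonpos₀ one_le_two (by omega)
  constructor
  · intro h
    rcases lt_trichotomy a₁ a₂ with hc | hc | hc
    · exact Or.inl hc
    · right
      refine ⟨hc, ?_⟩
      have hrr := hr hc
      subst hc hrr
      have h2p : (2:ℚ) ^ ((l₂ : ℤ) - (r₁ : ℤ)) ≤ (2:ℚ) ^ ((l₁ : ℤ) - (r₁ : ℤ)) := by
        linarith
      have := (zpow_le_zpow_iff_right₀ (a := (2:ℚ)) one_lt_two).1 h2p
      omega
    · exfalso
      have hcast : (a₂ : ℚ) + 1 ≤ (a₁ : ℚ) := by exact_mod_cast hc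
      linarith
  · rintro (hc | ⟨hc, hl⟩)
    · have hcast : (a₁ : ℚ) + 1 ≤ (a₂ : ℚ) := by exact_mod_cast hc
      linarith
    · have hrr := hr hc
      subst hc hrr
      have h2p : (2:ℚ) ^ ((l₂ : ℤ) - (r₁ : ℤ)) ≤ (2:ℚ) ^ ((l₁ : ℤ) - (r₁ : ℤ)) :=
        (zpow_le_zpow_iff_right₀ (a := (2:ℚ)) one_lt_two).2 (by omega)
      linarith

end EW

/-- for Σ-terms of the same degree and decoration word,
`T₁ ≤ T₂` in the easterly wind order iff every parent edge of `T₁` is dominated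
by the corresponding parent edge of `T₂`. -/
theorem stmt2 (σ : Signature) (n : ℕ) (T₁ T₂ : EW.PreTerm σ)
    (h₁ : EW.WF T₁) (h₂ : EW.WF T₂)
    (hn₁ : EW.deg T₁ = n) (hn₂ : EW.deg T₂ = n)
    (hd : EW.dcWord T₁ = EW.dcWord T₂) :
    EW.ewLE T₁ T₂ ↔
      ∀ i, 1 ≤ i → i ≤ n →
        EW.Dominated (EW.paOf T₁ i, EW.lpOf T₁ i) (EW.paOf T₂ i, EW.lpOf T₂ i) := by
  subst hn₁
  have key : ∀ i, 1 ≤ i → i ≤ EW.deg T₁ →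
      (EW.cnc T₁ i ≤ EW.cnc T₂ i ↔
        EW.Dominated (EW.paOf T₁ i, EW.lpOf T₁ i) (EW.paOf T₂ i, EW.lpOf T₂ i)) := by
    intro i hi1 hi2
    have F₁ := EW.nodeFacts h₁ hi1 hi2
    have F₂ := EW.nodeFacts h₂ hi1 (by omega)
    have harr : EW.paOf T₁ i = EW.paOf T₂ i →
        EW.arityOfNode T₁ (EW.paOf T₁ i) = EW.arityOfNode T₂ (EW.paOf T₂ i) := by
      intro he
      obtain ⟨s₁, hs₁, ha₁⟩ := EW.arity_eq_dcWord F₁.1 F₁.2.1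
      obtain ⟨s₂, hs₂, ha₂⟩ := EW.arity_eq_dcWord F₂.1 F₂.2.1
      rw [hd, he, hs₂] at hs₁
      rw [ha₁, ha₂, Option.some_inj.1 hs₁]
    simp only [EW.cnc, EW.Dominated]
    exact EW.cnc_le_iff F₁.2.2 F₂.2.2 harr
  constructor
  · rintro ⟨-, hc⟩ i hi1 hi2
    exact (key i hi1 hi2).1 (hc i hi1 hi2)
  · intro h
    exact ⟨hd, fun i hi1 hi2 => (key i hi1 hi2).2 (h i hi1 hi2)⟩
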